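/- Let A and B each consist of M qubits, let E ≥ 0, and let ρ ∈ SEP^{(E)}(A;B) be any density matrix in the convex hull of pure states with S_{1/2} entanglement at most E. Then Tr(ρ · |φ₊⟩⟨φ₊|^{⊗M}) ≤ 2^{−M+E}, where the i-th Bell pair |φ₊⟩ = (|00⟩+|11⟩)/√2 joins the i-th qubit of A with the i-th qubit of B. -/

import Mathlib

open scoped Matrix ComplexOrder ENNReal Classical

noncomputable section

abbrev QVec (n : ℕ) := (Fin n → Fin 2) → ℂ
abbrev QMat (n : ℕ) := Matrix (Fin n → Fin 2) (Fin n → Fin 2) ℂ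

/-- `ψ` is a unit vector (a pure state). -/
def IsUnitVec {n : ℕ} (ψ : QVec n) : Prop := ∑ x, Complex.normSq (ψ x) = 1

/-- The ℓ² norm of a vector. -/
def vnorm {n : ℕ} (v : QVec n) : ℝ := Real.sqrt (∑ x, Complex.normSq (v x))

/-- The density matrix `|ψ⟩⟨ψ|`. -/
def dm {n : ℕ} (ψ : QVec n) : QMat n := Matrix.vecMulVec ψ (star ψ)

/-- The four single-qubit Pauli matrices I, X, Y, Z. -/
def pauli1 : Fin 4 → Matrix (Fin 2) (Fin 2) ℂ :=
  ![1, !![0, 1; 1, 0], !![0, -Complex.I; Complex.I, 0], !![1, 0; 0, -1]]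

/-- The `n`-qubit Pauli operator `P₁ ⊗ ⋯ ⊗ P_n` given by a string `p`. -/
def pauliOp {n : ℕ} (p : Fin n → Fin 4) : QMat n :=
  fun x y => ∏ j, pauli1 (p j) (x j) (y j)

/-- The `n`-qubit Pauli group: matrices `i^a · P₁ ⊗ ⋯ ⊗ P_n`. -/
def PauliGroup (n : ℕ) : Set (QMat n) :=
  {M | ∃ (a : Fin 4) (p : Fin n → Fin 4), M = Complex.I ^ (a : ℕ) • pauliOp p}

/-- A Hermitian Pauli operator: `± P₁ ⊗ ⋯ ⊗ P_n`. -/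
def IsHermPauli {n : ℕ} (M : QMat n) : Prop :=
  ∃ (s : ℂ) (p : Fin n → Fin 4), (s = 1 ∨ s = -1) ∧ M = s • pauliOp p

/-- The stabilizer group `G = {P ∈ 𝒫_n : P|ψ⟩ = |ψ⟩}` of a pure state. -/
def stabGroup {n : ℕ} (ψ : QVec n) : Set (QMat n) :=
  {P | P ∈ PauliGroup n ∧ P.mulVec ψ = ψ}

/-- `M` is supported on the qubits in `A` (acts as the identity on the rest),
i.e. `M = f_A ⊗ 𝟙` for some matrix `f` on the `A` qubits. -/
def MatSupportedOn {n : ℕ} (A : Finset (Fin n)) (M : QMat n) : Prop :=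
  ∃ f : ({j // j ∈ A} → Fin 2) → ({j // j ∈ A} → Fin 2) → ℂ,
    ∀ x y, M x y =
      if ∀ j ∉ A, x j = y j then f (fun j => x j.1) (fun j => y j.1) else 0

/-- The local stabilizer subgroup `G_A`: stabilizers acting as the identity outside `A`. -/
def localStab {n : ℕ} (ψ : QVec n) (A : Finset (Fin n)) : Set (QMat n) :=
  {P | P ∈ stabGroup ψ ∧ MatSupportedOn A P}

/-- `log₂` of the cardinality of a set. -/
def logCard {α : Type*} (S : Set α) : ℝ := Real.logb 2 S.ncard

/-- The stabilizer entanglement `ℰ(ψ; A|B) = (|S| − |S_A| − |S_B|)/2` (with `B = Aᶜ`). -/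
def stabEnt {n : ℕ} (ψ : QVec n) (A : Finset (Fin n)) : ℝ :=
  (logCard (stabGroup ψ) - logCard (localStab ψ A) - logCard (localStab ψ Aᶜ)) / 2

/-- Combine an assignment on `A` and on `Aᶜ` into one on all qubits. -/
def mergeFn {n : ℕ} (A : Finset (Fin n)) (x : {j // j ∈ A} → Fin 2)
    (z : {j // j ∈ Aᶜ} → Fin 2) : Fin n → Fin 2 :=
  fun j => if h : j ∈ A then x ⟨j, h⟩ else z ⟨j, Finset.mem_compl.mpr h⟩

/-- The reduced density matrix `ψ_A = Tr_{Aᶜ} |ψ⟩⟨ψ|`. -/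
def reducedDM {n : ℕ} (A : Finset (Fin n)) (ψ : QVec n) :
    Matrix ({j // j ∈ A} → Fin 2) ({j // j ∈ A} → Fin 2) ℂ :=
  fun x y => ∑ z : {j // j ∈ Aᶜ} → Fin 2, ψ (mergeFn A x z) * star (ψ (mergeFn A y z))

/-- The α-Rényi entropy (base 2) of a Hermitian matrix, defined through its eigenvalues:
`S₀ = log₂ rank`, `S₁` the von Neumann entropy, `S_∞ = −log₂` (largest eigenvalue, which is
the operator norm for positive semidefinite matrices), and
`S_α = (1−α)⁻¹ log₂ Σ λ_i^α` otherwise. -/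
def renyi {m : Type*} [Fintype m] [DecidableEq m] (α : ℝ≥0∞)
    (ρ : Matrix m m ℂ) : ℝ :=
  if h : ρ.IsHermitian then
    if α = 0 then Real.logb 2 (ρ.rank : ℝ)
    else if α = 1 then -∑ i, h.eigenvalues i * Real.logb 2 (h.eigenvalues i)
    else if α = ⊤ then -Real.logb 2 (⨆ i, h.eigenvalues i)
    else (1 / (1 - α.toReal)) * Real.logb 2 (∑ i, h.eigenvalues i ^ α.toReal)
  else 0

def IsUnitary {n : ℕ} (U : QMat n) : Prop := U * Uᴴ = 1 ∧ Uᴴ * U = 1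

/-- A Clifford unitary: a unitary whose conjugation action maps the Pauli group onto itself. -/
def IsClifford {n : ℕ} (U : QMat n) : Prop :=
  IsUnitary U ∧ (fun P => U * P * Uᴴ) '' PauliGroup n = PauliGroup n

/-- Amplitudes of the Bell pair `|φ₊⟩ = (|00⟩+|11⟩)/√2`. -/
def bellAmp (a b : Fin 2) : ℂ := if a = b then ((Real.sqrt 2 : ℝ) : ℂ)⁻¹ else 0

/-- Trace out the last `m` qubits of a pure state on `n + m` qubits. -/
def traceOutLast {n m : ℕ} (Ψ : QVec (n + m)) : QMat n :=
  fun x y => ∑ z : Fin m → Fin 2,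
    Ψ (Fin.append x z) * star (Ψ (Fin.append y z))

/-- `Tr √ρ` for a positive semidefinite matrix (junk value `0` otherwise). -/
def sqrtTrace {m : Type*} [Fintype m] [DecidableEq m] (ρ : Matrix m m ℂ) : ℝ :=
  if h : ρ.PosSemidef then
    (h.1.eigenvectorUnitary.1 * Matrix.diagonal (((↑) : ℝ → ℂ) ∘ (Real.sqrt ·) ∘ h.1.eigenvalues) *
      (star h.1.eigenvectorUnitary : Matrix m m ℂ)).trace.re else 0

/-- `S_{1/2}(ψ_A) = 2 log₂ Tr √ψ_A`. -/
def sHalf {n : ℕ} (A : Finset (Fin n)) (ψ : QVec n) : ℝ :=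
  2 * Real.logb 2 (sqrtTrace (reducedDM A ψ))

/-- The set `SEP^{(E)}(A;B)`: convex hull of pure states with `S_{1/2}` entanglement ≤ E. -/
def SEPE {n : ℕ} (A : Finset (Fin n)) (E : ℝ) : Set (QMat n) :=
  convexHull ℝ {ρ | ∃ ψ : QVec n, IsUnitVec ψ ∧ sHalf A ψ ≤ E ∧ ρ = dm ψ}

/-- `ψ` is a product state across the bipartition `A | Aᶜ`. -/
def IsProdAcross {n : ℕ} (A : Finset (Fin n)) (ψ : QVec n) : Prop :=
  ∃ (f : ({j // j ∈ A} → Fin 2) → ℂ) (g : ({j // j ∈ Aᶜ} → Fin 2) → ℂ),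
    ∀ x, ψ x = f (fun j => x j.1) * g (fun j => x j.1)

/-- The separable states across `A | Aᶜ`. -/
def SEPset {n : ℕ} (A : Finset (Fin n)) : Set (QMat n) :=
  convexHull ℝ {ρ | ∃ ψ : QVec n, IsUnitVec ψ ∧ IsProdAcross A ψ ∧ ρ = dm ψ}

/-- The trace norm `‖X‖₁ = Tr √(XᴴX)` (sum of singular values). -/
def traceNorm {m : Type*} [Fintype m] [DecidableEq m] (X : Matrix m m ℂ) : ℝ :=
  sqrtTrace (Xᴴ * X)

end

noncomputable section

/-- The `M`-fold Bell state `|φ₊⟩^{⊗M}` on `M + M` qubits, where the `i`-th Bell pair joins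
the `i`-th qubit of the first half with the `i`-th qubit of the second half. -/
def bellM (M : ℕ) : QVec (M + M) :=
  fun x => ∏ i : Fin M, bellAmp (x (Fin.castAdd M i)) (x (Fin.natAdd M i))

/-!
For a pure state `ψ` with amplitude matrix `Ψ` across `A | B`, the overlap with `|φ₊⟩^{⊗M}` is
`2^{-M} |Tr Ψ|²`, and `|Tr Ψ| ≤ ‖Ψ‖₁ = Tr √(ΨΨᴴ) = Tr √ψ_A = 2^{S_{1/2}(ψ_A)/2}`. Hence the
overlap is at most `2^{E-M}` on the generating pure states of `SEP^{(E)}`, and the bound passes to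
their convex hull because the overlap is linear in `ρ`.
-/

open Matrix

theorem sq_norm_le_re_mul_conjTranspose_apply_self {m n : Type*} [Fintype n] (K : Matrix m n ℂ)
    (i : m) (j : n) : ‖K i j‖ ^ 2 ≤ ((K * Kᴴ) i i).re := by
  have hdiag : ((K * Kᴴ) i i).re = ∑ k, ‖K i k‖ ^ 2 := by
    simp [mul_apply, Complex.re_sum, Complex.mul_conj, Complex.normSq_eq_norm_sq,
      -Complex.ofReal_pow]
  rw [hdiag]
  exact Finset.single_le_sum (f := fun k => ‖K i k‖ ^ 2) (fun k _ => by positivity)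
    (Finset.mem_univ j)

section SqrtTrace

variable {m : Type*} [Fintype m] [DecidableEq m]

theorem sqrtTrace_eq_sum_sqrt_eigenvalues {X : Matrix m m ℂ} (hX : X.PosSemidef) :
    sqrtTrace X = ∑ i, √(hX.1.eigenvalues i) := by
  rw [sqrtTrace, dif_pos hX, trace_mul_cycle, Unitary.coe_star_mul_self, one_mul,
    trace_diagonal, Complex.re_sum]
  rfl

theorem sqrtTrace_nonneg (X : Matrix m m ℂ) : 0 ≤ sqrtTrace X := by
  by_cases hX : X.PosSemidef
  · rw [sqrtTrace_eq_sum_sqrt_eigenvalues hX]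
    positivity
  · rw [sqrtTrace, dif_neg hX]

/- In the eigenbasis of `ΨΨᴴ` the `i`-th diagonal entry of `Ψ` is bounded by the norm of the
`i`-th row, which is `√λᵢ`. -/
theorem norm_trace_le_sqrtTrace_mul_conjTranspose (Ψ : Matrix m m ℂ) :
    ‖Ψ.trace‖ ≤ sqrtTrace (Ψ * Ψᴴ) := by
  have hP := posSemidef_self_mul_conjTranspose Ψ
  set U : Matrix m m ℂ := (hP.1.eigenvectorUnitary : Matrix m m ℂ)
  set K := Uᴴ * Ψ * U
  have hU : U * Uᴴ = 1 := Unitary.coe_mul_star_self _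
  have htrace : Ψ.trace = K.trace := by
    rw [trace_mul_cycle, hU, one_mul]
  have hKK : K * Kᴴ = diagonal (RCLike.ofReal ∘ hP.1.eigenvalues) := by
    have hdiag := hP.1.conjStarAlgAut_star_eigenvectorUnitary
    rw [Unitary.conjStarAlgAut_apply, Unitary.coe_star, star_star, star_eq_conjTranspose] at hdiag
    have hKh : Kᴴ = Uᴴ * Ψᴴ * U := by
      simp only [K, conjTranspose_mul, conjTranspose_conjTranspose, mul_assoc]
    calc K * Kᴴ = Uᴴ * Ψ * (U * Uᴴ) * Ψᴴ * U := by rw [hKh]; simp only [K, mul_assoc]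
      _ = _ := by rw [hU, mul_one, ← hdiag, mul_assoc Uᴴ Ψ]
  rw [sqrtTrace_eq_sum_sqrt_eigenvalues hP, htrace]
  refine (norm_sum_le _ _).trans (Finset.sum_le_sum fun i _ => ?_)
  have hi := sq_norm_le_re_mul_conjTranspose_apply_self K i i
  rw [hKK, diagonal_apply_eq] at hi
  simpa using Real.sqrt_le_sqrt hi

end SqrtTrace

/-- The matrix `Ψ` of amplitudes of `ψ = ∑ Ψ x z |x⟩_A |z⟩_{Aᶜ}`. -/
def ampMat {n : ℕ} (A : Finset (Fin n)) (ψ : QVec n) :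
    Matrix ({j // j ∈ A} → Fin 2) ({j // j ∈ Aᶜ} → Fin 2) ℂ :=
  fun x z => ψ (mergeFn A x z)

theorem reducedDM_eq_ampMat_mul_conjTranspose {n : ℕ} (A : Finset (Fin n)) (ψ : QVec n) :
    reducedDM A ψ = ampMat A ψ * (ampMat A ψ)ᴴ :=
  rfl

theorem norm_sum_ampMat_le_sqrtTrace_reducedDM {n : ℕ} {ι : Type*} [Fintype ι]
    (A : Finset (Fin n)) (ψ : QVec n) (eA : ι ≃ ({j // j ∈ A} → Fin 2))
    (eB : ι ≃ ({j // j ∈ Aᶜ} → Fin 2)) :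
    ‖∑ i, ampMat A ψ (eA i) (eB i)‖ ≤ sqrtTrace (reducedDM A ψ) := by
  set Ψ := (ampMat A ψ).submatrix id (eA.symm.trans eB)
  have hΨ : Ψ * Ψᴴ = reducedDM A ψ := by
    rw [conjTranspose_submatrix, submatrix_mul_equiv _ _ _ (eA.symm.trans eB),
      submatrix_id_id, reducedDM_eq_ampMat_mul_conjTranspose]
  have htrace : Ψ.trace = ∑ i, ampMat A ψ (eA i) (eB i) := by
    rw [trace, ← Equiv.sum_comp eA]
    simp [Ψ]
  rw [← htrace, ← hΨ]
  exact norm_trace_le_sqrtTrace_mul_conjTranspose Ψ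

def firstHalf (M : ℕ) : Finset (Fin (M + M)) :=
  Finset.univ.filter (fun j : Fin (M + M) => (j : ℕ) < M)

def firstHalfEquiv (M : ℕ) : {j // j ∈ firstHalf M} ≃ Fin M where
  toFun j := ⟨j.1, by simpa [firstHalf] using j.2⟩
  invFun i := ⟨Fin.castAdd M i, by simp [firstHalf]⟩
  left_inv j := rfl
  right_inv i := rfl

def secondHalfEquiv (M : ℕ) : {j // j ∈ (firstHalf M)ᶜ} ≃ Fin M where
  toFun j := ⟨j.1 - M, by have := j.2; simp [firstHalf] at this; omega⟩
  invFun i := ⟨Fin.natAdd M i, by simp [firstHalf]⟩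
  left_inv j := by have := j.2; simp [firstHalf] at this; ext; simp; omega
  right_inv i := by ext; simp

theorem mergeFn_firstHalf (M : ℕ) (u v : Fin M → Fin 2) :
    mergeFn (firstHalf M) (u ∘ firstHalfEquiv M) (v ∘ secondHalfEquiv M) = Fin.append u v := by
  funext j
  refine Fin.addCases (fun i => ?_) (fun i => ?_) j
  · rw [Fin.append_left, mergeFn, dif_pos (by simp [firstHalf])]
    exact congrArg u (Fin.ext rfl)
  · rw [Fin.append_right, mergeFn, dif_neg (by simp [firstHalf])]
    exact congrArg v (Fin.ext (by simp [secondHalfEquiv]))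

theorem re_trace_dm_mul_dm {n : ℕ} (ψ φ : QVec n) :
    (trace (dm ψ * dm φ)).re = Complex.normSq (ψ ⬝ᵥ star φ) := by
  rw [dm, dm, vecMulVec_mul_vecMulVec, trace_vecMulVec, dotProduct_smul, smul_eq_mul,
    star_dotProduct, dotProduct_comm (star φ), Complex.star_def,
    ← Complex.normSq_eq_conj_mul_self, Complex.ofReal_re]

theorem bellM_append {M : ℕ} (u v : Fin M → Fin 2) :
    bellM M (Fin.append u v) = if u = v then ((√2 : ℝ) : ℂ)⁻¹ ^ M else 0 := by
  simp only [bellM, Fin.append_left, Fin.append_right, bellAmp]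
  split_ifs with h
  · simp [h]
  · obtain ⟨i, hi⟩ := Function.ne_iff.mp h
    exact Finset.prod_eq_zero (Finset.mem_univ i) (if_neg hi)

theorem dotProduct_star_bellM {M : ℕ} (ψ : QVec (M + M)) :
    ψ ⬝ᵥ star (bellM M) = ((√2 : ℝ) : ℂ)⁻¹ ^ M * ∑ u, ψ (Fin.append u u) := by
  rw [dotProduct, ← (Fin.appendEquiv M M).sum_comp, Fintype.sum_prod_type, Finset.mul_sum]
  refine Finset.sum_congr rfl fun u _ => ?_
  change ∑ v, ψ (Fin.append u v) * star (bellM M (Fin.append u v)) = _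
  simp [bellM_append, apply_ite (starRingEnd ℂ), mul_comm]

theorem re_trace_dm_mul_dm_bellM_le {M : ℕ} (ψ : QVec (M + M)) :
    (trace (dm ψ * dm (bellM M))).re ≤
      2⁻¹ ^ M * sqrtTrace (reducedDM (firstHalf M) ψ) ^ 2 := by
  have hsum :
      ‖∑ u, ampMat (firstHalf M) ψ (u ∘ firstHalfEquiv M) (u ∘ secondHalfEquiv M)‖ ≤
      sqrtTrace (reducedDM (firstHalf M) ψ) :=
    norm_sum_ampMat_le_sqrtTrace_reducedDM _ ψ ((firstHalfEquiv M).symm.arrowCongr (Equiv.refl _))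
      ((secondHalfEquiv M).symm.arrowCongr (Equiv.refl _))
  simp only [ampMat, mergeFn_firstHalf] at hsum
  rw [re_trace_dm_mul_dm, dotProduct_star_bellM, Complex.normSq_mul, Complex.normSq_eq_norm_sq,
    Complex.normSq_eq_norm_sq, norm_pow, norm_inv]
  have hc : (‖((√2 : ℝ) : ℂ)‖⁻¹ ^ M) ^ 2 = (2⁻¹ : ℝ) ^ M := by
    rw [← pow_mul, mul_comm, pow_mul, Complex.norm_real, Real.norm_of_nonneg (Real.sqrt_nonneg 2),
      inv_pow, Real.sq_sqrt zero_le_two, inv_pow]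
  rw [hc]
  gcongr

theorem sqrtTrace_sq_le_of_sHalf_le {n : ℕ} {A : Finset (Fin n)} {ψ : QVec n} {E : ℝ}
    (hψ : sHalf A ψ ≤ E) : sqrtTrace (reducedDM A ψ) ^ 2 ≤ (2 : ℝ) ^ E := by
  rcases (sqrtTrace_nonneg (reducedDM A ψ)).eq_or_lt with h0 | hpos
  · rw [← h0]
    simpa using Real.rpow_nonneg zero_le_two E
  · refine (Real.logb_le_iff_le_rpow one_lt_two (by positivity)).1 ?_
    rw [Real.logb_pow]
    exact_mod_cast hψ

theorem convex_setOf_re_trace_mul_le {m : Type*} [Fintype m] (D : Matrix m m ℂ) (c : ℝ) :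
    Convex ℝ {σ : Matrix m m ℂ | (trace (σ * D)).re ≤ c} := by
  refine convex_halfSpace_le ⟨fun σ τ => ?_, fun r σ => ?_⟩ c
  · simp [add_mul]
  · simp

theorem statement11_general (M : ℕ) (E : ℝ)
    (ρ : QMat (M + M))
    (hρ : ρ ∈ SEPE (Finset.univ.filter (fun j : Fin (M + M) => (j : ℕ) < M)) E) :
    (Matrix.trace (ρ * dm (bellM M))).re ≤ (2 : ℝ) ^ (E - (M : ℝ)) := by
  refine convexHull_min ?_ (convex_setOf_re_trace_mul_le _ _) hρ
  rintro _ ⟨ψ, -, hψ, rfl⟩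
  calc (trace (dm ψ * dm (bellM M))).re
      ≤ 2⁻¹ ^ M * sqrtTrace (reducedDM (firstHalf M) ψ) ^ 2 := re_trace_dm_mul_dm_bellM_le ψ
    _ ≤ 2⁻¹ ^ M * 2 ^ E := by gcongr; exact sqrtTrace_sq_le_of_sHalf_le hψ
    _ = 2 ^ (E - M) := by rw [Real.rpow_sub two_pos, Real.rpow_natCast, inv_pow]; ring

/-- for any `ρ ∈ SEP^{(E)}(A;B)` with `A`, `B` each of `M` qubits,
`Tr(ρ |φ₊⟩⟨φ₊|^{⊗M}) ≤ 2^{−M+E}`. -/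
theorem statement11 (M : ℕ) (E : ℝ) (hE : 0 ≤ E)
    (ρ : QMat (M + M))
    (hρ : ρ ∈ SEPE (Finset.univ.filter (fun j : Fin (M + M) => (j : ℕ) < M)) E) :
    (Matrix.trace (ρ * dm (bellM M))).re ≤ (2 : ℝ) ^ (E - (M : ℝ)) :=
  statement11_general M E ρ hρ

end
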